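/- arXiv:2302.05885 — 3 statements merged into one kernel-verified Lean document; each statement's English description precedes it below -/
import Mathlib

section
/- Let V be a nonnegative random variable with P[V ≥ s] ≤ 1 ∧ (κ n⁻¹ s^{−α}) for all s > 0, where α ∈ (1, 2), κ > 0 and n ≥ 1. Then E[V ∧ V²] ≤ C n⁻¹, where C depends only on α and κ. -/
open MeasureTheory ProbabilityTheory Set

/-! Since `v ∧ v² ≤ ∫₀^v 2 (t ∧ 1) dt` for `v ≥ 0`, the layer-cake formula bounds `E[V ∧ V²]` by
`∫₀^∞ 2 (t ∧ 1) P[V ≥ t] dt ≤ 2 κ n⁻¹ ∫₀^∞ (t ∧ 1) t^{-α} dt`, and the last integral is finite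
because `α < 2` (integrability at `0`) and `α > 1` (integrability at `∞`). -/

lemma intervalIntegral_two_mul_min_one_of_le_one {v : ℝ} (hv : 0 ≤ v) (hv1 : v ≤ 1) :
    ∫ t in (0 : ℝ)..v, 2 * min t 1 = v ^ 2 := by
  have hmin : ∀ t ∈ uIcc 0 v, 2 * min t 1 = 2 * t := fun t ht => by
    rw [uIcc_of_le hv] at ht
    rw [min_eq_left (ht.2.trans hv1)]
  rw [intervalIntegral.integral_congr hmin, intervalIntegral.integral_const_mul, integral_id]
  ring

lemma min_self_sq_le_intervalIntegral_two_mul_min_one {v : ℝ} (hv : 0 ≤ v) :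
    min v (v ^ 2) ≤ ∫ t in (0 : ℝ)..v, 2 * min t 1 := by
  rcases le_total v 1 with hv1 | hv1
  · rw [intervalIntegral_two_mul_min_one_of_le_one hv hv1]
    exact min_le_right _ _
  · have hcont : Continuous fun t : ℝ => 2 * min t 1 := by fun_prop
    have hmin : ∀ t ∈ uIcc 1 v, 2 * min t 1 = 2 := fun t ht => by
      rw [uIcc_of_le hv1] at ht
      rw [min_eq_right ht.1, mul_one]
    rw [← intervalIntegral.integral_add_adjacent_intervals (hcont.intervalIntegrable 0 1)
      (hcont.intervalIntegrable 1 v), intervalIntegral_two_mul_min_one_of_le_one zero_le_one le_rfl,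
      intervalIntegral.integral_congr hmin, intervalIntegral.integral_const, smul_eq_mul]
    linarith [min_le_left v (v ^ 2)]

lemma lintegral_Ioc_zero_one_ofReal_rpow {β : ℝ} (hβ : -1 < β) :
    ∫⁻ t in Ioc (0 : ℝ) 1, ENNReal.ofReal (t ^ β) = ENNReal.ofReal (1 / (β + 1)) := by
  have hint : IntegrableOn (fun t : ℝ => t ^ β) (Ioc 0 1) :=
    (intervalIntegrable_iff_integrableOn_Ioc_of_le zero_le_one).mp
      (intervalIntegral.intervalIntegrable_rpow' hβ)
  have hnn : 0 ≤ᵐ[volume.restrict (Ioc (0 : ℝ) 1)] fun t => t ^ β :=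
    (ae_restrict_mem measurableSet_Ioc).mono fun t ht => Real.rpow_nonneg ht.1.le β
  rw [← ofReal_integral_eq_lintegral_ofReal hint hnn,
    ← intervalIntegral.integral_of_le zero_le_one, integral_rpow (Or.inl hβ),
    Real.one_rpow, Real.zero_rpow (by linarith), sub_zero]

lemma lintegral_Ioi_one_ofReal_rpow {β : ℝ} (hβ : β < -1) :
    ∫⁻ t in Ioi (1 : ℝ), ENNReal.ofReal (t ^ β) = ENNReal.ofReal (-1 / (β + 1)) := by
  have hnn : 0 ≤ᵐ[volume.restrict (Ioi (1 : ℝ))] fun t => t ^ β :=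
    (ae_restrict_mem measurableSet_Ioi).mono fun t ht => Real.rpow_nonneg (zero_le_one.trans ht.le) β
  rw [← ofReal_integral_eq_lintegral_ofReal (integrableOn_Ioi_rpow_of_lt hβ one_pos) hnn,
    integral_Ioi_rpow_of_lt hβ one_pos, Real.one_rpow]

lemma lintegral_Ioi_ofReal_rpow_neg_mul_two_min_one {α : ℝ} (h1 : 1 < α) (h2 : α < 2) :
    ∫⁻ t in Ioi (0 : ℝ), ENNReal.ofReal (t ^ (-α) * (2 * min t 1))
      = ENNReal.ofReal (2 * (1 / (2 - α) + 1 / (α - 1))) := by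
  have hIoc : ∫⁻ t in Ioc (0 : ℝ) 1, ENNReal.ofReal (t ^ (-α) * (2 * min t 1))
      = ENNReal.ofReal (2 * (1 / (2 - α))) := by
    have hpow : ∀ t ∈ Ioc (0 : ℝ) 1, ENNReal.ofReal (t ^ (-α) * (2 * min t 1))
        = ENNReal.ofReal 2 * ENNReal.ofReal (t ^ (1 - α)) := fun t ht => by
      rw [← ENNReal.ofReal_mul zero_le_two, min_eq_left ht.2, sub_eq_neg_add,
        Real.rpow_add_one ht.1.ne']
      ring_nf
    rw [setLIntegral_congr_fun measurableSet_Ioc hpow, lintegral_const_mul' _ _ ENNReal.ofReal_ne_top,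
      lintegral_Ioc_zero_one_ofReal_rpow (by linarith), ← ENNReal.ofReal_mul zero_le_two]
    ring_nf
  have hIoi : ∫⁻ t in Ioi (1 : ℝ), ENNReal.ofReal (t ^ (-α) * (2 * min t 1))
      = ENNReal.ofReal (2 * (1 / (α - 1))) := by
    have hpow : ∀ t ∈ Ioi (1 : ℝ), ENNReal.ofReal (t ^ (-α) * (2 * min t 1))
        = ENNReal.ofReal 2 * ENNReal.ofReal (t ^ (-α)) := fun t ht => by
      rw [← ENNReal.ofReal_mul zero_le_two, min_eq_right ht.le]
      ring_nf
    rw [setLIntegral_congr_fun measurableSet_Ioi hpow, lintegral_const_mul' _ _ ENNReal.ofReal_ne_top,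
      lintegral_Ioi_one_ofReal_rpow (by linarith), ← ENNReal.ofReal_mul zero_le_two,
      ← neg_div_neg_eq, neg_neg, neg_add, neg_neg, ← sub_eq_add_neg]
  have := sub_pos.2 h1
  have := sub_pos.2 h2
  rw [← Ioc_union_Ioi_eq_Ioi zero_le_one, lintegral_union measurableSet_Ioi (Ioc_disjoint_Ioi le_rfl),
    hIoc, hIoi, ← ENNReal.ofReal_add (by positivity) (by positivity), mul_add]

theorem integral_min_self_sq_le_of_meas_le_rpow {Ω : Type*} [MeasurableSpace Ω] {μ : Measure Ω}
    {V : Ω → ℝ} (hV : Measurable V) (hV0 : ∀ ω, 0 ≤ V ω) {α c : ℝ} (h1 : 1 < α) (h2 : α < 2)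
    (hc : 0 ≤ c) (htail : ∀ t : ℝ, 0 < t → μ {ω | t ≤ V ω} ≤ ENNReal.ofReal (c * t ^ (-α))) :
    ∫ ω, min (V ω) (V ω ^ 2) ∂μ ≤ 2 * c * (1 / (2 - α) + 1 / (α - 1)) := by
  have hg_nn : ∀ᵐ t ∂volume.restrict (Ioi (0 : ℝ)), 0 ≤ 2 * min t 1 :=
    (ae_restrict_mem measurableSet_Ioi).mono fun t ht => mul_nonneg zero_le_two (le_min ht.le zero_le_one)
  have hbound : ∫⁻ ω, ENNReal.ofReal (min (V ω) (V ω ^ 2)) ∂μ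
      ≤ ENNReal.ofReal (2 * c * (1 / (2 - α) + 1 / (α - 1))) := calc
    _ ≤ ∫⁻ ω, ENNReal.ofReal (∫ t in (0 : ℝ)..V ω, 2 * min t 1) ∂μ :=
        lintegral_mono fun ω =>
          ENNReal.ofReal_le_ofReal (min_self_sq_le_intervalIntegral_two_mul_min_one (hV0 ω))
    _ = ∫⁻ t in Ioi 0, μ {ω | t ≤ V ω} * ENNReal.ofReal (2 * min t 1) :=
        lintegral_comp_eq_lintegral_meas_le_mul μ (ae_of_all _ hV0) hV.aemeasurable
          (fun t _ => (by fun_prop : Continuous fun t : ℝ => 2 * min t 1).intervalIntegrable 0 t)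
          hg_nn
    _ ≤ ∫⁻ t in Ioi 0, ENNReal.ofReal c * ENNReal.ofReal (t ^ (-α) * (2 * min t 1)) :=
        setLIntegral_mono' measurableSet_Ioi fun t ht => by
          rw [← ENNReal.ofReal_mul hc, ← mul_assoc,
            ENNReal.ofReal_mul (mul_nonneg hc (Real.rpow_nonneg ht.le _))]
          gcongr
          exact htail t ht
    _ = ENNReal.ofReal (2 * c * (1 / (2 - α) + 1 / (α - 1))) := by
        rw [lintegral_const_mul' _ _ ENNReal.ofReal_ne_top,
          lintegral_Ioi_ofReal_rpow_neg_mul_two_min_one h1 h2, ← ENNReal.ofReal_mul hc]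
        ring_nf
  rw [integral_eq_lintegral_of_nonneg_ae (ae_of_all _ fun ω => le_min (hV0 ω) (sq_nonneg _))
    (hV.min (hV.pow_const 2)).aestronglyMeasurable]
  exact ENNReal.toReal_le_of_le_ofReal (by have := sub_pos.2 h1; have := sub_pos.2 h2; positivity)
    hbound

/-- If `P[V ≥ s] ≤ 1 ∧ κ n⁻¹ s^{-α}` with `α ∈ (1,2)`, then
`E[V ∧ V²] ≤ C n⁻¹` where `C` depends only on `α, κ`. -/
theorem stmt9 (α κ : ℝ) (hα : α ∈ Set.Ioo (1 : ℝ) 2) (hκ : 0 < κ) :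
    ∃ C : ℝ, 0 < C ∧
      ∀ (Ω : Type) (_ : MeasureSpace Ω), IsProbabilityMeasure (ℙ : Measure Ω) →
      ∀ (V : Ω → ℝ), Measurable V → (∀ ω, 0 ≤ V ω) →
      ∀ n : ℕ, 1 ≤ n →
      (∀ s : ℝ, 0 < s → (ℙ {ω | s ≤ V ω}).toReal ≤ min 1 (κ * (n : ℝ)⁻¹ * s ^ (-α))) →
      (∫ ω, min (V ω) (V ω ^ 2)) ≤ C * (n : ℝ)⁻¹ := by
  obtain ⟨h1, h2⟩ := hα
  have := sub_pos.2 h1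
  have := sub_pos.2 h2
  refine ⟨2 * κ * (1 / (2 - α) + 1 / (α - 1)), by positivity, ?_⟩
  intro Ω _ _ V hV hV0 n _ htail
  calc ∫ ω, min (V ω) (V ω ^ 2) ≤ 2 * (κ * (n : ℝ)⁻¹) * (1 / (2 - α) + 1 / (α - 1)) :=
        integral_min_self_sq_le_of_meas_le_rpow hV hV0 h1 h2 (by positivity) fun t ht =>
          (ENNReal.le_ofReal_iff_toReal_le (measure_ne_top _ _) (by positivity)).2
            ((htail t ht).trans (min_le_right _ _))
    _ = 2 * κ * (1 / (2 - α) + 1 / (α - 1)) * (n : ℝ)⁻¹ := by ring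
end

section
/- Let V be a nonnegative random variable with P[V ≥ s] ≤ 1 ∧ (κ n⁻¹ s^{−2})^{γ} for all s > 0, where γ > 1, κ > 0 and n ≥ 1. Then E[V ∧ V²] ≤ C n⁻¹, where C depends only on γ and κ (no logarithmic factor). -/
open MeasureTheory ProbabilityTheory

/-- Strengthened critical case: if `P[V ≥ s] ≤ 1 ∧ (κ n⁻¹ s^{-2})^γ` with `γ > 1`, then
`E[V ∧ V²] ≤ C n⁻¹` (no logarithmic factor), with `C` depending only on `γ, κ`. -/
theorem stmt10 (γ κ : ℝ) (hγ : 1 < γ) (hκ : 0 < κ) :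
    ∃ C : ℝ, 0 < C ∧
      ∀ (Ω : Type) (_ : MeasureSpace Ω), IsProbabilityMeasure (ℙ : Measure Ω) →
      ∀ (V : Ω → ℝ), Measurable V → (∀ ω, 0 ≤ V ω) →
      ∀ n : ℕ, 1 ≤ n →
      (∀ s : ℝ, 0 < s →
        (ℙ {ω | s ≤ V ω}).toReal ≤ min 1 ((κ * (n : ℝ)⁻¹ * s ^ (-2 : ℝ)) ^ γ)) →
      (∫ ω, min (V ω) (V ω ^ 2)) ≤ C * (n : ℝ)⁻¹ := by
  have hγ1 : (0:ℝ) < γ - 1 := by linarith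
  refine ⟨κ * γ / (γ - 1), by positivity, ?_⟩
  intro Ω _ hP V hV hV0 n hn hTail
  have hn0 : (0:ℝ) < (n:ℝ) := by exact_mod_cast Nat.lt_of_lt_of_le Nat.zero_lt_one hn
  set a : ℝ := κ * (n:ℝ)⁻¹ with ha_def
  have ha : 0 < a := by positivity
  set X : Ω → ℝ := fun ω => min (V ω) (V ω ^ 2) with hXdef
  have hXm : Measurable X := hV.min (hV.pow_const 2)
  have hX0 : ∀ ω, 0 ≤ X ω := fun ω => le_min (hV0 ω) (sq_nonneg _)
  have hCn : κ * γ / (γ - 1) * (n:ℝ)⁻¹ = a + a / (γ - 1) := by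
    rw [ha_def]; field_simp; ring
  rw [show (fun ω => min (V ω) (V ω ^ 2)) = X from rfl] at *
  rw [integral_eq_lintegral_of_nonneg_ae (Filter.Eventually.of_forall hX0)
    hXm.aestronglyMeasurable,
    lintegral_eq_lintegral_meas_le ℙ (Filter.Eventually.of_forall hX0) hXm.aemeasurable]
  -- pointwise tail bound
  have stepA : ∀ t ∈ Set.Ioi (0:ℝ),
      ℙ {ω | t ≤ X ω} ≤ ENNReal.ofReal (min 1 ((a / t) ^ γ)) := by
    intro t ht
    have ht0 : (0:ℝ) < t := ht
    have hst : 0 < Real.sqrt t := Real.sqrt_pos.2 ht0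
    have hsub : {ω | t ≤ X ω} ⊆ {ω | Real.sqrt t ≤ V ω} := by
      intro ω hω
      have h1 : t ≤ V ω ^ 2 := le_trans hω (min_le_right _ _)
      have := Real.sqrt_le_sqrt h1
      rwa [Real.sqrt_sq (hV0 ω)] at this
    have hrw : κ * (n:ℝ)⁻¹ * (Real.sqrt t) ^ (-2 : ℝ) = a / t := by
      rw [show (-2:ℝ) = ((-2 : ℤ) : ℝ) by norm_num, Real.rpow_intCast]
      rw [zpow_neg, show ((2:ℤ)) = ((2:ℕ):ℤ) from rfl, zpow_natCast, Real.sq_sqrt ht0.le]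
      rw [ha_def]; ring
    calc ℙ {ω | t ≤ X ω} ≤ ℙ {ω | Real.sqrt t ≤ V ω} := measure_mono hsub
      _ = ENNReal.ofReal ((ℙ {ω | Real.sqrt t ≤ V ω}).toReal) :=
          (ENNReal.ofReal_toReal (measure_ne_top _ _)).symm
      _ ≤ ENNReal.ofReal (min 1 ((κ * (n:ℝ)⁻¹ * (Real.sqrt t) ^ (-2 : ℝ)) ^ γ)) :=
          ENNReal.ofReal_le_ofReal (hTail _ hst)
      _ = ENNReal.ofReal (min 1 ((a / t) ^ γ)) := by rw [hrw]
  have hmono : (∫⁻ t in Set.Ioi (0:ℝ), ℙ {ω | t ≤ X ω})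
      ≤ ∫⁻ t in Set.Ioi (0:ℝ), ENNReal.ofReal (min 1 ((a / t) ^ γ)) := by
    refine lintegral_mono_ae ?_
    filter_upwards [ae_restrict_mem measurableSet_Ioi] with t ht
    exact stepA t ht
  -- split the integral
  have hsplit : Set.Ioi (0:ℝ) = Set.Ioc 0 a ∪ Set.Ioi a :=
    (Set.Ioc_union_Ioi_eq_Ioi ha.le).symm
  have hI1 : (∫⁻ t in Set.Ioc (0:ℝ) a, ENNReal.ofReal (min 1 ((a / t) ^ γ)))
      ≤ ENNReal.ofReal a := by
    calc (∫⁻ t in Set.Ioc (0:ℝ) a, ENNReal.ofReal (min 1 ((a / t) ^ γ)))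
        ≤ ∫⁻ _ in Set.Ioc (0:ℝ) a, 1 := by
          refine setLIntegral_mono measurable_const (fun t _ => ?_)
          exact ENNReal.ofReal_le_one.mpr (min_le_left _ _)
      _ = volume (Set.Ioc (0:ℝ) a) := by rw [setLIntegral_one]
      _ = ENNReal.ofReal a := by rw [Real.volume_Ioc, sub_zero]
  have hI2 : (∫⁻ t in Set.Ioi a, ENNReal.ofReal (min 1 ((a / t) ^ γ)))
      ≤ ENNReal.ofReal (a / (γ - 1)) := by
    have hb : (∫⁻ t in Set.Ioi a, ENNReal.ofReal (min 1 ((a / t) ^ γ)))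
        ≤ ∫⁻ t in Set.Ioi a, ENNReal.ofReal ((a / t) ^ γ) :=
      lintegral_mono (fun t => ENNReal.ofReal_le_ofReal (min_le_right _ _))
    refine hb.trans ?_
    have hcong : (∫⁻ t in Set.Ioi a, ENNReal.ofReal ((a / t) ^ γ))
        = ∫⁻ t in Set.Ioi a, ENNReal.ofReal (a ^ γ) * ENNReal.ofReal (t ^ (-γ)) := by
      refine setLIntegral_congr_fun measurableSet_Ioi
        (fun t ht => ?_)
      have ht0 : 0 < t := lt_trans ha ht
      rw [← ENNReal.ofReal_mul (Real.rpow_nonneg ha.le _)]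
      congr 1
      rw [Real.div_rpow ha.le ht0.le, Real.rpow_neg ht0.le, div_eq_mul_inv]
    rw [hcong, lintegral_const_mul' _ _ ENNReal.ofReal_ne_top]
    have hint : IntegrableOn (fun t : ℝ => t ^ (-γ)) (Set.Ioi a) :=
      integrableOn_Ioi_rpow_of_lt (by linarith) ha
    have hval : (∫⁻ t in Set.Ioi a, ENNReal.ofReal (t ^ (-γ)))
        = ENNReal.ofReal (∫ t in Set.Ioi a, t ^ (-γ)) := by
      rw [← ofReal_integral_eq_lintegral_ofReal hint]
      filter_upwards [ae_restrict_mem measurableSet_Ioi] with t ht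
      exact Real.rpow_nonneg (le_of_lt (lt_trans ha ht)) _
    rw [hval, integral_Ioi_rpow_of_lt (by linarith) ha,
      ← ENNReal.ofReal_mul (Real.rpow_nonneg ha.le _)]
    refine ENNReal.ofReal_le_ofReal (le_of_eq ?_)
    have hpow : a ^ γ * a ^ (-γ + 1) = a := by
      rw [← Real.rpow_add ha]; norm_num
    have h1 : -γ + 1 ≠ 0 := by linarith
    have h2 : γ - 1 ≠ 0 := by linarith
    calc a ^ γ * (-a ^ (-γ + 1) / (-γ + 1))
        = (a ^ γ * a ^ (-γ + 1)) / (γ - 1) := by field_simp; ring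
      _ = a / (γ - 1) := by rw [hpow]
  have key : (∫⁻ t in Set.Ioi (0:ℝ), ℙ {ω | t ≤ X ω})
      ≤ ENNReal.ofReal (κ * γ / (γ - 1) * (n:ℝ)⁻¹) := by
    refine hmono.trans ?_
    rw [hsplit, lintegral_union measurableSet_Ioi (Set.Ioc_disjoint_Ioi le_rfl)]
    calc _ ≤ ENNReal.ofReal a + ENNReal.ofReal (a / (γ - 1)) := add_le_add hI1 hI2
      _ = ENNReal.ofReal (a + a / (γ - 1)) := (ENNReal.ofReal_add ha.le (by positivity)).symm
      _ = ENNReal.ofReal (κ * γ / (γ - 1) * (n:ℝ)⁻¹) := by rw [hCn]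
  calc (∫⁻ t in Set.Ioi (0:ℝ), ℙ {ω | t ≤ X ω}).toReal
      ≤ (ENNReal.ofReal (κ * γ / (γ - 1) * (n:ℝ)⁻¹)).toReal :=
        ENNReal.toReal_mono ENNReal.ofReal_ne_top key
    _ = κ * γ / (γ - 1) * (n:ℝ)⁻¹ := ENNReal.toReal_ofReal (by positivity)
end

section
/- Let ψ : ℝ → ℝ be C⁵ with all derivatives up to order 5 bounded, γ > 0, and N a standard normal random variable. Define h_γ(x) = ∫₀^∞ ( E[ψ(√γ N)] − E[ψ(e^{−θ} x + √(1 − e^{−2θ}) √γ N)] ) dθ. Then h_γ is differentiable with h_γ'(x) = −∫₀^∞ e^{−θ} E[ψ'(e^{−θ} x + √(1 − e^{−2θ}) √γ N)] dθ, and in particular ‖h_γ'‖_∞ ≤ ‖ψ'‖_∞. -/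
set_option maxHeartbeats 1000000

open MeasureTheory ProbabilityTheory Real

lemma gauss_abs_int' : Integrable (fun y : ℝ => |y|) (gaussianReal 0 1) := by
  rw [gaussianReal_of_var_ne_zero 0 one_ne_zero,
    integrable_withDensity_iff (measurable_gaussianPDF 0 1)
      (ae_of_all _ fun x => ENNReal.ofReal_lt_top)]
  have h1 : Integrable (fun x : ℝ => |x ^ (1:ℝ) * Real.exp (-(2⁻¹) * x ^ 2)|) volume :=
    (integrable_rpow_mul_exp_neg_mul_sq (by norm_num : (0:ℝ) < 2⁻¹) (by norm_num : (-1:ℝ) < 1)).abs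
  have h2 : Integrable (fun x : ℝ => (Real.sqrt (2 * π))⁻¹ * |x * Real.exp (-(2⁻¹) * x ^ 2)|)
      volume := by
    simpa [Real.rpow_one] using h1.const_mul (Real.sqrt (2 * π))⁻¹
  refine h2.congr (ae_of_all _ fun x => ?_)
  simp only [gaussianPDF_def, gaussianPDFReal_def]
  rw [ENNReal.toReal_ofReal (by positivity), abs_mul, abs_of_nonneg (Real.exp_pos _).le]
  push_cast
  ring_nf

lemma inner_deriv' (ψ : ℝ → ℝ) (hψ : ContDiff ℝ 5 ψ) (M0 M1 : ℝ)
    (hψbd : ∀ x, |ψ x| ≤ M0) (hM1 : ∀ x, |deriv ψ x| ≤ M1)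
    (c d : ℝ) (x : ℝ) :
    HasDerivAt (fun x' => ∫ y, ψ (c * x' + d * y) ∂(gaussianReal 0 1))
      (c * ∫ y, deriv ψ (c * x + d * y) ∂(gaussianReal 0 1)) x := by
  have hc : Continuous ψ := hψ.continuous
  have hc' : Continuous (deriv ψ) := hψ.continuous_deriv (by norm_num)
  have hd : Differentiable ℝ ψ := hψ.differentiable (by norm_num)
  have key := hasDerivAt_integral_of_dominated_loc_of_deriv_le (μ := gaussianReal 0 1)
    (F := fun x' y => ψ (c * x' + d * y))
    (F' := fun x' y => c * deriv ψ (c * x' + d * y)) (x₀ := x)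
    (bound := fun _ => |c| * M1) (Metric.ball_mem_nhds _ one_pos)
    (Filter.Eventually.of_forall fun x' =>
      (hc.comp (by continuity)).aestronglyMeasurable)
    ?_ ((hc'.comp (by continuity)).aestronglyMeasurable.const_mul c)
    (ae_of_all _ fun y x' _ => by
      rw [Real.norm_eq_abs, abs_mul]
      exact mul_le_mul_of_nonneg_left (hM1 _) (abs_nonneg c))
    (integrable_const _)
    (ae_of_all _ fun y x' _ => ?_)
  · have := key.2
    rwa [MeasureTheory.integral_const_mul] at this
  · refine (integrable_const M0).mono' (hc.comp (by continuity)).aestronglyMeasurable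
      (ae_of_all _ fun y => ?_)
    simpa using hψbd _
  · have h1 : HasDerivAt (fun x'' : ℝ => c * x'' + d * y) c x' := by
      simpa using ((hasDerivAt_id x').const_mul c).add_const (d * y)
    have h2 := (hd (c * x' + d * y)).hasDerivAt.comp x' h1
    rw [mul_comm c (deriv ψ _)]
    exact h2

/-- The solution `h_γ` of the Stein equation, given by the Mehler-type formula
`h_γ(x) = ∫₀^∞ (E[ψ(√γ N)] − E[ψ(e^{-θ}x + √(1-e^{-2θ})√γ N)]) dθ`, is differentiable
with `h_γ'(x) = −∫₀^∞ e^{-θ} E[ψ'(e^{-θ}x + √(1-e^{-2θ})√γ N)] dθ` and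
`‖h_γ'‖_∞ ≤ ‖ψ'‖_∞`. -/
theorem stmt18 (ψ : ℝ → ℝ) (hψ : ContDiff ℝ 5 ψ)
    (hbd : ∀ l ≤ 5, ∃ M : ℝ, ∀ x, |iteratedDeriv l ψ x| ≤ M)
    (M1 : ℝ) (hM1 : ∀ x, |deriv ψ x| ≤ M1)
    (γ : ℝ) (hγ : 0 < γ) :
    ∀ x : ℝ,
      HasDerivAt (fun x' : ℝ => ∫ θ in Set.Ioi (0 : ℝ),
          ((∫ y, ψ (Real.sqrt γ * y) ∂(gaussianReal 0 1)) -
            ∫ y, ψ (Real.exp (-θ) * x' +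
              Real.sqrt (1 - Real.exp (-(2 * θ))) * Real.sqrt γ * y) ∂(gaussianReal 0 1)))
        (-(∫ θ in Set.Ioi (0 : ℝ), Real.exp (-θ) *
            ∫ y, deriv ψ (Real.exp (-θ) * x +
              Real.sqrt (1 - Real.exp (-(2 * θ))) * Real.sqrt γ * y) ∂(gaussianReal 0 1))) x ∧
      |(-(∫ θ in Set.Ioi (0 : ℝ), Real.exp (-θ) *
            ∫ y, deriv ψ (Real.exp (-θ) * x +
              Real.sqrt (1 - Real.exp (-(2 * θ))) * Real.sqrt γ * y) ∂(gaussianReal 0 1)))|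
        ≤ M1 := by
  intro x
  obtain ⟨M0, hM0⟩ := hbd 0 (by norm_num)
  have hψbd : ∀ z, |ψ z| ≤ M0 := fun z => by simpa [iteratedDeriv_zero] using hM0 z
  have hM1_0 : 0 ≤ M1 := le_trans (abs_nonneg _) (hM1 0)
  have hc : Continuous ψ := hψ.continuous
  have hc' : Continuous (deriv ψ) := hψ.continuous_deriv (by norm_num)
  have hd : Differentiable ℝ ψ := hψ.differentiable (by norm_num)
  set μg := gaussianReal 0 1 with hμg
  set K := ∫ y, |y| ∂μg with hK
  set C := ∫ y, ψ (Real.sqrt γ * y) ∂μg with hC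
  -- continuity of the scaling factor
  have hscont : Continuous (fun θ : ℝ => Real.sqrt (1 - Real.exp (-(2 * θ)))) :=
    Real.continuous_sqrt.comp (by continuity)
  -- bound for the inner derivative integral
  have hIbd : ∀ a b : ℝ, |∫ y, deriv ψ (a + b * y) ∂μg| ≤ M1 := by
    intro a b
    rw [← Real.norm_eq_abs]
    refine (norm_integral_le_of_norm_le (integrable_const M1)
      (ae_of_all _ fun y => by simpa using hM1 _)).trans ?_
    simp
  -- Lipschitz estimate
  have hlip : ∀ a b : ℝ, |ψ a - ψ b| ≤ M1 * |a - b| := by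
    intro a b
    have := convex_univ.norm_image_sub_le_of_norm_deriv_le (f := ψ)
      (fun z _ => hd z) (fun z _ => by simpa using hM1 z) (Set.mem_univ b) (Set.mem_univ a)
    simpa [Real.norm_eq_abs] using this
  -- boundedness integrability helper
  have hint_bdd : ∀ g : ℝ → ℝ, Continuous g → Integrable (fun y => ψ (g y)) μg := by
    intro g hg
    exact (integrable_const M0).mono' (hc.comp hg).aestronglyMeasurable
      (ae_of_all _ fun y => by simpa using hψbd _)
  -- continuity in θ of the inner integrals
  have hGcont : ∀ x' : ℝ, Continuous (fun θ : ℝ =>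
      ∫ y, ψ (Real.exp (-θ) * x' + Real.sqrt (1 - Real.exp (-(2 * θ))) * Real.sqrt γ * y) ∂μg) := by
    intro x'
    refine continuous_of_dominated (bound := fun _ => M0)
      (fun θ => (hc.comp (by continuity)).aestronglyMeasurable)
      (fun θ => ae_of_all _ fun y => by simpa using hψbd _)
      (integrable_const M0) (ae_of_all _ fun y => ?_)
    exact hc.comp (by continuity)
  have hIcont : Continuous (fun θ : ℝ =>
      ∫ y, deriv ψ (Real.exp (-θ) * x + Real.sqrt (1 - Real.exp (-(2 * θ))) * Real.sqrt γ * y) ∂μg) := by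
    refine continuous_of_dominated (bound := fun _ => M1)
      (fun θ => (hc'.comp (by continuity)).aestronglyMeasurable)
      (fun θ => ae_of_all _ fun y => by simpa using hM1 _)
      (integrable_const M1) (ae_of_all _ fun y => ?_)
    exact hc'.comp (by continuity)
  have hexp_int : IntegrableOn (fun θ : ℝ => Real.exp (-θ)) (Set.Ioi (0:ℝ)) := by
    simpa using exp_neg_integrableOn_Ioi 0 one_pos
  -- main application of differentiation under the integral sign
  have key := hasDerivAt_integral_of_dominated_loc_of_deriv_le
      (μ := volume.restrict (Set.Ioi (0:ℝ)))
      (F := fun x' θ => C - ∫ y, ψ (Real.exp (-θ) * x' +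
        Real.sqrt (1 - Real.exp (-(2 * θ))) * Real.sqrt γ * y) ∂μg)
      (F' := fun x' θ => -(Real.exp (-θ) * ∫ y, deriv ψ (Real.exp (-θ) * x' +
        Real.sqrt (1 - Real.exp (-(2 * θ))) * Real.sqrt γ * y) ∂μg))
      (x₀ := x) (bound := fun θ => M1 * Real.exp (-θ)) (Metric.ball_mem_nhds _ one_pos)
      (Filter.Eventually.of_forall fun x' =>
        ((continuous_const.sub (hGcont x')).aestronglyMeasurable))
      ?hFint
      (((Real.continuous_exp.comp continuous_neg).mul hIcont).neg.aestronglyMeasurable)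
      (ae_of_all _ fun θ x' _ => ?hbound)
      (hexp_int.const_mul M1)
      (ae_of_all _ fun θ x' _ => ?hdiff)
  case hbound =>
    rw [norm_neg, Real.norm_eq_abs, abs_mul, abs_of_nonneg (Real.exp_pos _).le, mul_comm]
    exact mul_le_mul_of_nonneg_right (hIbd _ _) (Real.exp_pos _).le
  case hdiff =>
    exact (inner_deriv' ψ hψ M0 M1 hψbd hM1 (Real.exp (-θ))
      (Real.sqrt (1 - Real.exp (-(2 * θ))) * Real.sqrt γ) x').const_sub C
  case hFint =>
    refine (Integrable.mono' (g := fun θ => (M1 * (|x| + Real.sqrt γ * K)) * Real.exp (-θ))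
      (hexp_int.const_mul _) (continuous_const.sub (hGcont x)).aestronglyMeasurable ?_)
    filter_upwards [ae_restrict_mem measurableSet_Ioi] with θ hθmem
    have hθ : (0:ℝ) < θ := Set.mem_Ioi.mp hθmem
    set c := Real.exp (-θ) with hcdef
    set s := Real.sqrt (1 - Real.exp (-(2 * θ))) with hsdef
    have hc1 : c ≤ 1 := Real.exp_le_one_iff.mpr (by linarith)
    have hc0 : 0 < c := Real.exp_pos _
    have hu0 : (0:ℝ) ≤ 1 - Real.exp (-(2 * θ)) := by
      have : Real.exp (-(2 * θ)) ≤ 1 := Real.exp_le_one_iff.mpr (by linarith)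
      linarith
    have hs_sq : s ^ 2 = 1 - Real.exp (-(2 * θ)) := Real.sq_sqrt hu0
    have hs0 : 0 ≤ s := Real.sqrt_nonneg _
    have h1s : 1 - s ≤ Real.exp (-(2 * θ)) := by nlinarith [Real.exp_pos (-(2*θ))]
    have hs1 : s ≤ 1 := by nlinarith
    have he2 : Real.exp (-(2 * θ)) ≤ c := by
      rw [hcdef]
      exact Real.exp_le_exp.mpr (by linarith)
    -- rewrite the difference as a single integral
    rw [hC, ← integral_sub (hint_bdd _ (by continuity)) (hint_bdd _ (by continuity))]
    rw [Real.norm_eq_abs, ← Real.norm_eq_abs]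
    refine (norm_integral_le_of_norm_le (g := fun y => M1 * c * |x| + (M1 * c * Real.sqrt γ) * |y|)
      ((integrable_const _).add (gauss_abs_int'.const_mul _)) (ae_of_all _ fun y => ?_)).trans ?_
    · rw [Real.norm_eq_abs]
      refine (hlip _ _).trans ?_
      have habs : |Real.sqrt γ * y - (c * x + s * Real.sqrt γ * y)| ≤
          c * |x| + (c * Real.sqrt γ) * |y| := by
        have : Real.sqrt γ * y - (c * x + s * Real.sqrt γ * y) =
            (1 - s) * (Real.sqrt γ * y) - c * x := by ring
        rw [this]
        refine (abs_sub _ _).trans ?_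
        rw [abs_mul, abs_mul, abs_mul, abs_of_nonneg (by linarith : (0:ℝ) ≤ 1 - s),
          abs_of_nonneg hc0.le, abs_of_nonneg (Real.sqrt_nonneg γ)]
        have h1 : (1 - s) * (Real.sqrt γ * |y|) ≤ c * (Real.sqrt γ * |y|) := by
          refine mul_le_mul_of_nonneg_right (le_trans h1s he2) (by positivity)
        nlinarith [abs_nonneg y, abs_nonneg x, Real.sqrt_nonneg γ]
      calc M1 * |Real.sqrt γ * y - (c * x + s * Real.sqrt γ * y)|
          ≤ M1 * (c * |x| + (c * Real.sqrt γ) * |y|) :=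
            mul_le_mul_of_nonneg_left habs hM1_0
        _ = M1 * c * |x| + (M1 * c * Real.sqrt γ) * |y| := by ring
    · rw [integral_add (integrable_const _) (gauss_abs_int'.const_mul _),
        MeasureTheory.integral_const_mul]
      simp only [integral_const, measure_univ, probReal_univ, ENNReal.toReal_one, smul_eq_mul, one_mul]
      rw [hK, hμg]
      exact le_of_eq (by rw [MeasureTheory.integral_const_mul]; ring)
  constructor
  · have := key.2
    rwa [MeasureTheory.integral_neg] at this
  · rw [abs_neg, ← Real.norm_eq_abs]
    refine (norm_integral_le_of_norm_le (μ := volume.restrict (Set.Ioi (0:ℝ)))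
      (g := fun θ => M1 * Real.exp (-θ)) (hexp_int.const_mul M1)
      (ae_of_all _ fun θ => ?_)).trans ?_
    · rw [Real.norm_eq_abs, abs_mul, abs_of_nonneg (Real.exp_pos _).le, mul_comm]
      exact mul_le_mul_of_nonneg_right (hIbd _ _) (Real.exp_pos _).le
    · rw [MeasureTheory.integral_const_mul, integral_exp_neg_Ioi_zero, mul_one]
end
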